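/- arXiv:2507.10220 — 3 statements merged into one kernel-verified Lean document; each statement's English description precedes it below -/
import Mathlib

section
/- Let H be a Hilbert space and let K : H → H be a compact, self-adjoint, positive semidefinite operator. For any κ with 0 < κ < 1 and any ν > 0, the operator norm of (K + νI)^{-1} K^κ is at most κ^κ (1-κ)^{1-κ} ν^{-(1-κ)}. -/
/-!
By the continuous functional calculus, `(K + ν)⁻¹ K^κ = f(K)` with `f x = x^κ / (x + ν)`, so its
norm is at most the supremum of `f` over `[0, ∞) ⊇ σ(K)`. Weighted AM-GM with weights `κ, 1 - κ`
gives `x + ν ≥ (x/κ)^κ (ν/(1-κ))^(1-κ)`, which is exactly the bound on `f`.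
-/

theorem Real.rpow_div_add_le {κ ν x : ℝ} (hκ0 : 0 < κ) (hκ1 : κ < 1) (hν : 0 < ν) (hx : 0 ≤ x) :
    x ^ κ / (x + ν) ≤ κ ^ κ * (1 - κ) ^ (1 - κ) * ν ^ (-(1 - κ)) := by
  have h1κ : 0 < 1 - κ := by linarith
  have amgm : (x / κ) ^ κ * (ν / (1 - κ)) ^ (1 - κ) ≤ x + ν := by
    calc (x / κ) ^ κ * (ν / (1 - κ)) ^ (1 - κ)
        ≤ κ * (x / κ) + (1 - κ) * (ν / (1 - κ)) :=
          geom_mean_le_arith_mean2_weighted hκ0.le h1κ.le (by positivity) (by positivity)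
            (by ring)
      _ = x + ν := by field_simp
  have hνκ : ν ^ (-(1 - κ)) * ν ^ (1 - κ) = 1 := by
    rw [← rpow_add hν, neg_add_cancel, rpow_zero]
  have cancel : κ ^ κ * (1 - κ) ^ (1 - κ) * ν ^ (-(1 - κ)) *
      ((x / κ) ^ κ * (ν / (1 - κ)) ^ (1 - κ)) = x ^ κ := by
    rw [div_rpow hx hκ0.le, div_rpow hν.le h1κ.le]
    have : κ ^ κ ≠ 0 := (rpow_pos_of_pos hκ0 κ).ne'
    have : (1 - κ) ^ (1 - κ) ≠ 0 := (rpow_pos_of_pos h1κ _).ne'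
    field_simp
    linear_combination x ^ κ * hνκ
  rw [div_le_iff₀ (by positivity), ← cancel]
  gcongr

section

variable {R A : Type*} {p : A → Prop} [Semifield R] [StarRing R] [MetricSpace R]
  [IsTopologicalSemiring R] [ContinuousStar R] [ContinuousInv₀ R] [TopologicalSpace A]
  [Ring A] [StarRing A] [Algebra R A] [ContinuousFunctionalCalculus R A p]

lemma eq_cfc_inv_of_mul_cfc_eq_one {f : R → R} {a b : A} (hf' : ∀ x ∈ spectrum R a, f x ≠ 0)
    (hb : b * cfc f a = 1) (hf : ContinuousOn f (spectrum R a) := by cfc_cont_tac)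
    (ha : p a := by cfc_tac) : b = cfc (fun x ↦ (f x)⁻¹) a :=
  (Units.mul_eq_one_iff_eq_inv (u := cfcUnits f a hf')).mp hb

end

section

variable {A : Type*} [CStarAlgebra A] [PartialOrder A] [StarOrderedRing A]

lemma norm_cfc_inv_add_mul_cfc_rpow_le {a : A} (ha : 0 ≤ a) {κ ν : ℝ} (hκ0 : 0 < κ) (hκ1 : κ < 1)
    (hν : 0 < ν) :
    ‖cfc (fun x : ℝ ↦ (x + ν)⁻¹) a * cfc (fun x : ℝ ↦ x ^ κ) a‖ ≤
      κ ^ κ * (1 - κ) ^ (1 - κ) * ν ^ (-(1 - κ)) := by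
  have hspec : ∀ x ∈ spectrum ℝ a, 0 ≤ x := fun x hx ↦ spectrum_nonneg_of_nonneg ha hx
  have hcont : ContinuousOn (fun x : ℝ ↦ (x + ν)⁻¹) (spectrum ℝ a) :=
    ContinuousOn.inv₀ (by fun_prop) fun x hx ↦ by linarith [hspec x hx]
  rw [← cfc_mul _ _ a hcont (by fun_prop (disch := positivity))]
  refine norm_cfc_le (by positivity) fun x hx ↦ ?_
  have hx := hspec x hx
  rw [Real.norm_of_nonneg (by positivity), inv_mul_eq_div]
  exact Real.rpow_div_add_le hκ0 hκ1 hν hx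

end

theorem stmt0_general {H : Type*} [NormedAddCommGroup H] [InnerProductSpace ℂ H] [CompleteSpace H]
    (K : H →L[ℂ] H)
    (hKpos : K.IsPositive)
    (κ ν : ℝ) (hκ0 : 0 < κ) (hκ1 : κ < 1) (hν : 0 < ν)
    (B : H →L[ℂ] H)
    (hB2 : B * (K + (ν : ℂ) • (1 : H →L[ℂ] H)) = 1) :
    ‖B * cfc (fun x : ℝ => x ^ κ) K‖ ≤ κ ^ κ * (1 - κ) ^ (1 - κ) * ν ^ (-(1 - κ)) := by
  have hK : 0 ≤ K := K.nonneg_iff_isPositive.mpr hKpos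
  have hshift : K + (ν : ℂ) • (1 : H →L[ℂ] H) = cfc (fun x : ℝ ↦ x + ν) K := by
    rw [cfc_add_const ν _ K, cfc_id' ℝ K, Algebra.algebraMap_eq_smul_one, ← Complex.coe_smul]
  have hne : ∀ x ∈ spectrum ℝ K, x + ν ≠ 0 := fun x hx ↦
    (add_pos_of_nonneg_of_pos (spectrum_nonneg_of_nonneg hK hx) hν).ne'
  rw [eq_cfc_inv_of_mul_cfc_eq_one (b := B) hne (hshift ▸ hB2)]
  exact norm_cfc_inv_add_mul_cfc_rpow_le hK hκ0 hκ1 hν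

/-- Let `H` be a Hilbert space and `K : H → H` a compact, self-adjoint,
positive semidefinite operator. For `0 < κ < 1` and `ν > 0`, the operator norm of
`(K + νI)⁻¹ K^κ` is at most `κ^κ (1-κ)^(1-κ) ν^(-(1-κ))`. The inverse of `K + νI`
(which exists since `K ⪰ 0` and `ν > 0`) is represented by a two-sided inverse `B`,
and `K^κ` is defined via the continuous functional calculus. -/
theorem stmt0 {H : Type*} [NormedAddCommGroup H] [InnerProductSpace ℂ H] [CompleteSpace H]
    (K : H →L[ℂ] H) (hKc : IsCompactOperator K) (hKsa : IsSelfAdjoint K)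
    (hKpos : K.IsPositive)
    (κ ν : ℝ) (hκ0 : 0 < κ) (hκ1 : κ < 1) (hν : 0 < ν)
    (B : H →L[ℂ] H)
    (hB1 : (K + (ν : ℂ) • (1 : H →L[ℂ] H)) * B = 1)
    (hB2 : B * (K + (ν : ℂ) • (1 : H →L[ℂ] H)) = 1) :
    ‖B * cfc (fun x : ℝ => x ^ κ) K‖ ≤ κ ^ κ * (1 - κ) ^ (1 - κ) * ν ^ (-(1 - κ)) :=
  stmt0_general K hKpos κ ν hκ0 hκ1 hν B hB2
end

section
/- Let ν > 0 and let K be a positive self-adjoint compact operator with trivial kernel on a Hilbert space H, with K + νI invertible. For μ ∈ H, define μ̄_ν := (K + νI)^{-1} K μ. Then μ − μ̄_ν = ν (K + νI)^{-1} μ, and consequently ‖μ − μ̄_ν‖ ≤ ‖μ‖ for all ν > 0; moreover if μ = K^κ δ with 0 < κ ≤ 1 and ‖δ‖² ≤ M, then ‖μ − μ̄_ν‖² ≤ M κ^{2κ}(1−κ)^{2(1−κ)} ν^{2κ}. -/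
/-!
Since `B` is a left inverse of `K + ν`, we have `1 - B K = ν B`. Functional calculus for the
positive operator `K` turns `ν B K^κ` into `f(K)` with `f(x) = ν x^κ / (x + ν)`, so its norm is at
most the supremum of `f` on `[0, ∞)`, which weighted AM–GM bounds by `κ^κ (1-κ)^(1-κ) ν^κ`.
At `κ = 0` (where `0 ^ 0 = 1`) this reads `‖ν B‖ ≤ 1`, giving the bound by `‖μ‖`.
-/

lemma rpow_mul_rpow_le_mul_add {κ x y : ℝ} (hκ0 : 0 ≤ κ) (hκ1 : κ ≤ 1) (hx : 0 ≤ x) (hy : 0 ≤ y) :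
    x ^ κ * y ^ (1 - κ) ≤ κ ^ κ * (1 - κ) ^ (1 - κ) * (x + y) := by
  rcases hκ0.eq_or_lt with rfl | hκ0
  · simpa using hx
  rcases hκ1.eq_or_lt with rfl | hκ1
  · simpa using hy
  have h1κ : 0 < 1 - κ := sub_pos.mpr hκ1
  have amgm := Real.geom_mean_le_arith_mean2_weighted hκ0.le h1κ.le (div_nonneg hx hκ0.le)
    (div_nonneg hy h1κ.le) (add_sub_cancel κ 1)
  rw [Real.div_rpow hx hκ0.le, Real.div_rpow hy h1κ.le, mul_div_cancel₀ x hκ0.ne',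
    mul_div_cancel₀ y h1κ.ne', div_mul_div_comm, div_le_iff₀ (by positivity)] at amgm
  linarith

lemma mul_rpow_div_add_le {κ ν x : ℝ} (hκ0 : 0 ≤ κ) (hκ1 : κ ≤ 1) (hν : 0 < ν) (hx : 0 ≤ x) :
    ν * x ^ κ / (x + ν) ≤ κ ^ κ * (1 - κ) ^ (1 - κ) * ν ^ κ := by
  rw [div_le_iff₀ (by positivity)]
  calc ν * x ^ κ = ν ^ κ * (x ^ κ * ν ^ (1 - κ)) := by
        rw [mul_left_comm, ← Real.rpow_add hν, add_sub_cancel, Real.rpow_one, mul_comm]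
    _ ≤ ν ^ κ * (κ ^ κ * (1 - κ) ^ (1 - κ) * (x + ν)) :=
        mul_le_mul_of_nonneg_left (rpow_mul_rpow_le_mul_add hκ0 hκ1 hx hν.le) (by positivity)
    _ = κ ^ κ * (1 - κ) ^ (1 - κ) * ν ^ κ * (x + ν) := by ring

section CStarAlgebra

variable {A : Type*} [CStarAlgebra A] [PartialOrder A] [StarOrderedRing A] {a b : A} {ν κ : ℝ}

lemma smul_mul_cfc_rpow_eq_cfc (ha : 0 ≤ a) (hν : 0 < ν) (hb : b * (a + algebraMap ℝ A ν) = 1)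
    (hκ : 0 ≤ κ) :
    ν • (b * cfc (fun x : ℝ => x ^ κ) a) = cfc (fun x : ℝ => ν * x ^ κ / (x + ν)) a := by
  have hspec : ∀ x ∈ spectrum ℝ a, x + ν ≠ 0 := fun x hx =>
    (add_pos_of_nonneg_of_pos (spectrum_nonneg_of_nonneg ha hx) hν).ne'
  have hg : ContinuousOn (fun x : ℝ => ν * x ^ κ / (x + ν)) (spectrum ℝ a) :=
    (continuous_const.mul (Real.continuous_rpow_const hκ)).continuousOn.div (by fun_prop) hspec
  calc ν • (b * cfc (fun x : ℝ => x ^ κ) a)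
      = b * cfc (fun x : ℝ => ν * x ^ κ) a := by
        rw [cfc_const_mul ν _ a, mul_smul_comm]
    _ = b * cfc (fun x : ℝ => (x + ν) * (ν * x ^ κ / (x + ν))) a := by
        congr 1
        exact cfc_congr fun x hx => by field_simp [hspec x hx]
    _ = b * (cfc (fun x : ℝ => x + ν) a * cfc (fun x : ℝ => ν * x ^ κ / (x + ν)) a) := by
        rw [cfc_mul (fun x : ℝ => x + ν) _ a (by fun_prop) hg]
    _ = cfc (fun x : ℝ => ν * x ^ κ / (x + ν)) a := by
        rw [cfc_add_const ν (fun x : ℝ => x) a, cfc_id' ℝ a, ← mul_assoc, hb, one_mul]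

lemma norm_smul_mul_cfc_rpow_le (ha : 0 ≤ a) (hν : 0 < ν) (hb : b * (a + algebraMap ℝ A ν) = 1)
    (hκ0 : 0 ≤ κ) (hκ1 : κ ≤ 1) :
    ‖ν • (b * cfc (fun x : ℝ => x ^ κ) a)‖ ≤ κ ^ κ * (1 - κ) ^ (1 - κ) * ν ^ κ := by
  have h1κ : 0 ≤ 1 - κ := sub_nonneg.mpr hκ1
  rw [smul_mul_cfc_rpow_eq_cfc ha hν hb hκ0]
  refine norm_cfc_le (by positivity) fun x hx => ?_
  have hx0 : 0 ≤ x := spectrum_nonneg_of_nonneg ha hx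
  rw [Real.norm_of_nonneg (by positivity)]
  exact mul_rpow_div_add_le hκ0 hκ1 hν hx0

end CStarAlgebra

lemma norm_smul_apply_cfc_rpow_le {E : Type*} [NormedAddCommGroup E] [InnerProductSpace ℂ E]
    [CompleteSpace E] {K B : E →L[ℂ] E} {ν κ : ℝ} (hK : 0 ≤ K) (hν : 0 < ν)
    (hB : B * (K + algebraMap ℝ _ ν) = 1) (hκ0 : 0 ≤ κ) (hκ1 : κ ≤ 1) (x : E) :
    ‖(ν : ℂ) • B (cfc (fun t : ℝ => t ^ κ) K x)‖ ≤ κ ^ κ * (1 - κ) ^ (1 - κ) * ν ^ κ * ‖x‖ := by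
  simpa [Complex.coe_smul] using ((ν • (B * cfc (fun t : ℝ => t ^ κ) K)).le_opNorm x).trans
    (mul_le_mul_of_nonneg_right (norm_smul_mul_cfc_rpow_le hK hν hB hκ0 hκ1) (norm_nonneg x))

theorem stmt14_general {H : Type*} [NormedAddCommGroup H] [InnerProductSpace ℂ H] [CompleteSpace H]
    (K : H →L[ℂ] H)
    (hKpos : K.IsPositive)
    (ν : ℝ) (hν : 0 < ν)
    (B : H →L[ℂ] H)
    (hB2 : B * (K + (ν : ℂ) • (1 : H →L[ℂ] H)) = 1)
    (μ : H) :
    μ - B (K μ) = (ν : ℂ) • B μ ∧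
    ‖μ - B (K μ)‖ ≤ ‖μ‖ ∧
    (∀ (κ M : ℝ) (δ : H), 0 < κ → κ ≤ 1 → ‖δ‖ ^ 2 ≤ M →
      μ = cfc (fun x : ℝ => x ^ κ) K δ →
      ‖μ - B (K μ)‖ ^ 2 ≤ M * κ ^ (2 * κ) * (1 - κ) ^ (2 * (1 - κ)) * ν ^ (2 * κ)) := by
  have hK : 0 ≤ K := (ContinuousLinearMap.nonneg_iff_isPositive K).mpr hKpos
  have hB : B * (K + algebraMap ℝ _ ν) = 1 := by
    rwa [Algebra.algebraMap_eq_smul_one, ← Complex.coe_smul]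
  have hid : μ - B (K μ) = (ν : ℂ) • B μ := by
    simpa [sub_eq_iff_eq_add'] using congr($hB2 μ).symm
  refine ⟨hid, ?_, fun κ M δ hκ hκ1 hδ hμ => ?_⟩
  · simpa [hid, cfc_const_one ℝ K] using
      norm_smul_apply_cfc_rpow_le hK hν hB le_rfl zero_le_one μ
  · have h1κ : 0 ≤ 1 - κ := sub_nonneg.mpr hκ1
    have sq_rpow : ∀ t s : ℝ, 0 ≤ t → (t ^ s) ^ 2 = t ^ (2 * s) := fun t s ht => by
      rw [← Real.rpow_natCast, ← Real.rpow_mul ht, mul_comm]; norm_num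
    calc ‖μ - B (K μ)‖ ^ 2 ≤ (κ ^ κ * (1 - κ) ^ (1 - κ) * ν ^ κ * ‖δ‖) ^ 2 := by
          rw [hid, hμ]
          exact pow_le_pow_left₀ (norm_nonneg _)
            (norm_smul_apply_cfc_rpow_le hK hν hB hκ.le hκ1 δ) 2
      _ = κ ^ (2 * κ) * (1 - κ) ^ (2 * (1 - κ)) * ν ^ (2 * κ) * ‖δ‖ ^ 2 := by
          rw [mul_pow, mul_pow, mul_pow, sq_rpow κ κ hκ.le, sq_rpow (1 - κ) (1 - κ) h1κ,
            sq_rpow ν κ hν.le]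
      _ ≤ κ ^ (2 * κ) * (1 - κ) ^ (2 * (1 - κ)) * ν ^ (2 * κ) * M := by gcongr
      _ = M * κ ^ (2 * κ) * (1 - κ) ^ (2 * (1 - κ)) * ν ^ (2 * κ) := by ring

/-- Let `ν > 0` and let `K` be a positive self-adjoint compact operator with
trivial kernel on a Hilbert space `H`, with `K + νI` invertible (inverse `B`). For `μ ∈ H`,
define `μ̄_ν := (K + νI)⁻¹ K μ = B (K μ)`. Then `μ − μ̄_ν = ν (K + νI)⁻¹ μ`, hence
`‖μ − μ̄_ν‖ ≤ ‖μ‖`; moreover if `μ = K^κ δ` with `0 < κ ≤ 1` and `‖δ‖² ≤ M` then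
`‖μ − μ̄_ν‖² ≤ M κ^{2κ}(1−κ)^{2(1−κ)} ν^{2κ}`. -/
theorem stmt14 {H : Type*} [NormedAddCommGroup H] [InnerProductSpace ℂ H] [CompleteSpace H]
    (K : H →L[ℂ] H) (hKc : IsCompactOperator K) (hKsa : IsSelfAdjoint K)
    (hKpos : K.IsPositive) (hker : LinearMap.ker (K : H →ₗ[ℂ] H) = ⊥)
    (ν : ℝ) (hν : 0 < ν)
    (B : H →L[ℂ] H)
    (hB1 : (K + (ν : ℂ) • (1 : H →L[ℂ] H)) * B = 1)
    (hB2 : B * (K + (ν : ℂ) • (1 : H →L[ℂ] H)) = 1)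
    (μ : H) :
    μ - B (K μ) = (ν : ℂ) • B μ ∧
    ‖μ - B (K μ)‖ ≤ ‖μ‖ ∧
    (∀ (κ M : ℝ) (δ : H), 0 < κ → κ ≤ 1 → ‖δ‖ ^ 2 ≤ M →
      μ = cfc (fun x : ℝ => x ^ κ) K δ →
      ‖μ - B (K μ)‖ ^ 2 ≤ M * κ ^ (2 * κ) * (1 - κ) ^ (2 * (1 - κ)) * ν ^ (2 * κ)) :=
  stmt14_general K hKpos ν hν B hB2 μ
end

section
/- Let H be a Hilbert space with closed subspace V, and let L : H → ℝ be of the form L(f) = Q(P_V f) + ν‖f‖², where Q is any function of the orthogonal projection P_V f onto V, and ν > 0. Then any minimizer of L belongs to V, and if Q is convex the minimizer is unique. -/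
/-!
Since `‖P_V f‖ ≤ ‖f‖` with equality only on `V`, replacing `f` by `P_V f` leaves the `Q`-term
unchanged and strictly lowers the penalty unless `f ∈ V`. If `Q` is convex, then `L - ν ‖·‖²`
is convex, i.e. `L` is `2ν`-strongly convex, and a strictly convex function has at most one
minimizer.
-/

open Set

lemma ConvexOn.strongConvexOn_add_mul_norm_sq {E : Type*} [NormedAddCommGroup E]
    [InnerProductSpace ℝ E] {s : Set E} {g : E → ℝ} (hg : ConvexOn ℝ s g) (ν : ℝ) :
    StrongConvexOn s (2 * ν) fun x ↦ g x + ν * ‖x‖ ^ 2 := by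
  rw [strongConvexOn_iff_convex]
  simpa using hg

namespace Submodule

variable {H : Type*} [NormedAddCommGroup H] [InnerProductSpace ℝ H]
  (V : Submodule ℝ H) [V.HasOrthogonalProjection]

noncomputable def penalizedRisk (Q : V → ℝ) (ν : ℝ) (f : H) : ℝ :=
  Q (V.orthogonalProjectionOnto f) + ν * ‖f‖ ^ 2

variable {V}

theorem mem_of_isMinOn_penalizedRisk {Q : V → ℝ} {ν : ℝ} (hν : 0 < ν) {f : H}
    (hf : IsMinOn (V.penalizedRisk Q ν) univ f) : f ∈ V := by
  have hle : ‖f‖ ^ 2 ≤ ‖V.starProjection f‖ ^ 2 := by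
    have := isMinOn_univ_iff.1 hf (V.orthogonalProjectionOnto f)
    rw [penalizedRisk, penalizedRisk, V.orthogonalProjectionOnto_mem_subspace_eq_self,
      ← V.starProjection_apply] at this
    exact le_of_mul_le_mul_left (le_of_add_le_add_left this) hν
  rw [V.mem_iff_norm_starProjection]
  exact le_antisymm (V.norm_starProjection_apply_le f)
    (pow_le_pow_iff_left₀ (norm_nonneg _) (norm_nonneg _) two_ne_zero |>.1 hle)

theorem strictConvexOn_penalizedRisk {Q : V → ℝ} (hQ : ConvexOn ℝ univ Q) {ν : ℝ} (hν : 0 < ν) :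
    StrictConvexOn ℝ univ (V.penalizedRisk Q ν) :=
  ((hQ.comp_linearMap (V.orthogonalProjectionOnto : H →ₗ[ℝ] V)).strongConvexOn_add_mul_norm_sq
    ν).strictConvexOn (by positivity)

end Submodule

theorem stmt19_general {H : Type*} [NormedAddCommGroup H] [InnerProductSpace ℝ H]
    (V : Submodule ℝ H) [V.HasOrthogonalProjection]
    (Q : V → ℝ) (ν : ℝ) (hν : 0 < ν) :
    (∀ f : H,
      (∀ g : H, Q (V.orthogonalProjectionOnto f) + ν * ‖f‖ ^ 2 ≤
        Q (V.orthogonalProjectionOnto g) + ν * ‖g‖ ^ 2) → f ∈ V) ∧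
    (ConvexOn ℝ Set.univ Q → ∀ f₁ f₂ : H,
      (∀ g : H, Q (V.orthogonalProjectionOnto f₁) + ν * ‖f₁‖ ^ 2 ≤
        Q (V.orthogonalProjectionOnto g) + ν * ‖g‖ ^ 2) →
      (∀ g : H, Q (V.orthogonalProjectionOnto f₂) + ν * ‖f₂‖ ^ 2 ≤
        Q (V.orthogonalProjectionOnto g) + ν * ‖g‖ ^ 2) →
      f₁ = f₂) :=
  ⟨fun _ hf ↦ Submodule.mem_of_isMinOn_penalizedRisk hν (isMinOn_univ_iff.2 hf),
    fun hQ _ _ h₁ h₂ ↦ (Submodule.strictConvexOn_penalizedRisk hQ hν).eq_of_isMinOn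
      (isMinOn_univ_iff.2 h₁) (isMinOn_univ_iff.2 h₂) (mem_univ _) (mem_univ _)⟩

/-- **abstract representer theorem.** Let `H` be a Hilbert space with a closed
subspace `V` (with orthogonal projection `P_V`), `ν > 0`, and
`L(f) = Q(P_V f) + ν ‖f‖²` for an arbitrary function `Q` of the projection. Then any minimizer
of `L` belongs to `V`, and if `Q` is convex the minimizer is unique. -/
theorem stmt19 {H : Type*} [NormedAddCommGroup H] [InnerProductSpace ℝ H] [CompleteSpace H]
    (V : Submodule ℝ H) [V.HasOrthogonalProjection]
    (Q : V → ℝ) (ν : ℝ) (hν : 0 < ν) :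
    (∀ f : H,
      (∀ g : H, Q (V.orthogonalProjectionOnto f) + ν * ‖f‖ ^ 2 ≤
        Q (V.orthogonalProjectionOnto g) + ν * ‖g‖ ^ 2) → f ∈ V) ∧
    (ConvexOn ℝ Set.univ Q → ∀ f₁ f₂ : H,
      (∀ g : H, Q (V.orthogonalProjectionOnto f₁) + ν * ‖f₁‖ ^ 2 ≤
        Q (V.orthogonalProjectionOnto g) + ν * ‖g‖ ^ 2) →
      (∀ g : H, Q (V.orthogonalProjectionOnto f₂) + ν * ‖f₂‖ ^ 2 ≤
        Q (V.orthogonalProjectionOnto g) + ν * ‖g‖ ^ 2) →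
      f₁ = f₂) :=
  stmt19_general V Q ν hν
end
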